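/- Let M ∈ ℝ^{m×n} with m < n be full rank, p ∈ ℝ^m, B = {x ∈ ℝ^n : Mx = p}, and suppose there exists x̄ ∈ A_s ∩ B with exactly s nonzero entries (‖x̄‖₀ = s). If s < rank(M), then every open neighborhood of x̄ contains a point z with z ∈ R_{A_s}(R_B z) (equivalently, z is a fixed point of the Douglas–Rachford operator T_DR = ½(R_{A_s}R_B + Id)) such that z ∉ A_s ∩ B. -/

import Mathlib

/-- Number of nonzero entries of a vector (the ℓ₀-"norm"). -/
noncomputable def sparsity {n : ℕ} (x : EuclideanSpace ℝ (Fin n)) : ℕ :=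
  (Finset.univ.filter (fun i => x i ≠ 0)).card

/-- `A_s`, the set of vectors with at most `s` nonzero entries. -/
def Asp (n s : ℕ) : Set (EuclideanSpace ℝ (Fin n)) := {x | sparsity x ≤ s}

/-- The (possibly set-valued) projector onto a set `Ω`. -/
def projSet {n : ℕ} (Ω : Set (EuclideanSpace ℝ (Fin n))) (x : EuclideanSpace ℝ (Fin n)) :
    Set (EuclideanSpace ℝ (Fin n)) :=
  {y | y ∈ Ω ∧ ∀ z ∈ Ω, ‖x - y‖ ≤ ‖x - z‖}

/-- The affine constraint set `B = {x | Mx = p}`. -/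
def Bset {m n : ℕ} (M : Matrix (Fin m) (Fin n) ℝ) (p : Fin m → ℝ) :
    Set (EuclideanSpace ℝ (Fin n)) := {x | M.mulVec x = p}

/-- Coercion of a plain vector into Euclidean space. -/
def vecE {m : ℕ} (v : Fin m → ℝ) : EuclideanSpace ℝ (Fin m) := WithLp.toLp 2 v

/-- The Moore–Penrose inverse `M† = Mᵀ(MMᵀ)⁻¹` of a full-rank wide matrix. -/
noncomputable def Mdag {m n : ℕ} (M : Matrix (Fin m) (Fin n) ℝ) : Matrix (Fin n) (Fin m) ℝ :=
  M.transpose * (M * M.transpose)⁻¹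

/-- The (single-valued) orthogonal projection onto `B`, `P_B x = x - M†(Mx - p)`. -/
noncomputable def projB {m n : ℕ} (M : Matrix (Fin m) (Fin n) ℝ) (p : Fin m → ℝ)
    (x : EuclideanSpace ℝ (Fin n)) : EuclideanSpace ℝ (Fin n) :=
  x - vecE ((Mdag M).mulVec (M.mulVec x - p))

/-- The (single-valued) reflector across `B`, `R_B = 2P_B - Id`. -/
noncomputable def reflB {m n : ℕ} (M : Matrix (Fin m) (Fin n) ℝ) (p : Fin m → ℝ)
    (x : EuclideanSpace ℝ (Fin n)) : EuclideanSpace ℝ (Fin n) :=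
  (2:ℝ) • projB M p x - x

/-
Let `S` be the support of `x̄`. As `#S = s < m`, some `u ≠ 0` has `Mᵀu` vanishing on `S`. The
vector `d = Mᵀu` lies in `(ker M)ᗮ`, so `P_B (x̄ + d) = x̄` and `R_B (x̄ + d) = x̄ - d`,
while `M d = MMᵀu ≠ 0` puts `x̄ + d` outside `B`. Since `d` vanishes on `S`, once `d` is small the
entries of `x̄ - d` outside `S` are below every nonzero `|x̄ i|`, so `x̄` is a best `s`-sparse
approximation of `x̄ - d` and `z = x̄ + d` satisfies `z = 2 x̄ - R_B z`. Shrinking `u` brings `z`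
arbitrarily close to `x̄`.
-/

open Matrix Finset Filter Topology

theorem Matrix.isUnit_det_of_rank_eq_card {K n : Type*} [Field K] [Fintype n] [DecidableEq n]
    {A : Matrix n n K} (h : A.rank = Fintype.card n) : IsUnit A.det := by
  rw [← isUnit_iff_isUnit_det, ← mulVec_surjective_iff_isUnit, ← coe_mulVecLin,
    ← LinearMap.range_eq_top]
  exact Submodule.eq_top_of_finrank_eq (by rw [Module.finrank_fintype_fun_eq_card, ← h]; rfl)

theorem Matrix.exists_ne_zero_forall_mem_transpose_mulVec_eq_zero {K m n : Type*} [Field K]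
    [Fintype m] (M : Matrix m n K) {S : Finset n} (hS : #S < Fintype.card m) :
    ∃ u : m → K, u ≠ 0 ∧ ∀ i ∈ S, (Mᵀ *ᵥ u) i = 0 := by
  let L := (LinearMap.funLeft K K ((↑) : S → n)).comp Mᵀ.mulVecLin
  have hker : LinearMap.ker L ≠ ⊥ := LinearMap.ker_ne_bot_of_finrank_lt (by simpa using hS)
  obtain ⟨u, hu, hu0⟩ := (Submodule.ne_bot_iff _).1 hker
  exact ⟨u, hu0, fun i hi => congrFun (LinearMap.mem_ker.1 hu) ⟨i, hi⟩⟩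

theorem Finset.sum_le_sum_of_card_le_of_le_of_le {ι M : Type*} [DecidableEq ι] [AddCommMonoid M]
    [PartialOrder M] [IsOrderedAddMonoid M] {f : ι → M} {s t : Finset ι} {c : M} (hc : 0 ≤ c)
    (hcard : #t ≤ #s) (hs : ∀ i ∈ s, c ≤ f i) (ht : ∀ i ∈ t, i ∉ s → f i ≤ c) :
    ∑ i ∈ t, f i ≤ ∑ i ∈ s, f i := by
  rw [← sum_inter_add_sum_sdiff t s, ← sum_inter_add_sum_sdiff s t, inter_comm]
  refine add_le_add le_rfl ?_
  calc ∑ i ∈ t \ s, f i ≤ #(t \ s) • c :=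
        sum_le_card_nsmul _ _ _ fun i hi => ht i (mem_sdiff.1 hi).1 (mem_sdiff.1 hi).2
    _ ≤ #(s \ t) • c := nsmul_le_nsmul_left hc (card_sdiff_le_card_sdiff_iff.2 hcard)
    _ ≤ ∑ i ∈ s \ t, f i := card_nsmul_le_sum _ _ _ fun i hi => hs i (mem_sdiff.1 hi).1

/- For `y` supported on `T`, `‖w - y‖² ≥ ‖w‖² - ∑_{i ∈ T} w i ^ 2` with equality for `y = x`,
and the support of `x` carries the largest entries of `w`. -/
theorem mem_projSet_Asp_sparsity_sub {n : ℕ} {x : EuclideanSpace ℝ (Fin n)} {d : Fin n → ℝ}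
    {c : ℝ} (hc : 0 ≤ c) (hd : ∀ i, x i ≠ 0 → d i = 0)
    (hx : ∀ i, x i ≠ 0 → c ≤ |x i|) (hdc : ∀ i, |d i| ≤ c) :
    x ∈ projSet (Asp n (sparsity x)) (x - vecE d) := by
  refine ⟨(le_rfl : sparsity x ≤ _), fun y hy => ?_⟩
  set w := x - vecE d
  have hw : ∀ i, w i = x i - d i := fun i => rfl
  have hx_split : ∀ i, (w i - x i) ^ 2 + (if x i ≠ 0 then w i ^ 2 else 0) = w i ^ 2 := by
    intro i
    by_cases hi : x i = 0 <;> simp [hi, hw, hd]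
  have hy_split : ∀ i, w i ^ 2 ≤ (w i - y i) ^ 2 + (if y i ≠ 0 then w i ^ 2 else 0) := by
    intro i
    by_cases hi : y i = 0 <;> simp [hi, sq_nonneg]
  have hsupp : ∑ i with y i ≠ 0, w i ^ 2 ≤ ∑ i with x i ≠ 0, w i ^ 2 := by
    refine sum_le_sum_of_card_le_of_le_of_le (sq_nonneg c) hy (fun i hi => ?_) fun i _ hi => ?_
    · have hi : x i ≠ 0 := (mem_filter.1 hi).2
      rw [hw, hd i hi, sub_zero, ← sq_abs (x i)]
      exact pow_le_pow_left₀ hc (hx i hi) 2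
    · have hi : x i = 0 := by simpa using hi
      rw [hw, hi, zero_sub, neg_sq, ← sq_abs (d i)]
      exact pow_le_pow_left₀ (abs_nonneg _) (hdc i) 2
  rw [← sq_le_sq₀ (norm_nonneg _) (norm_nonneg _), EuclideanSpace.real_norm_sq_eq,
    EuclideanSpace.real_norm_sq_eq]
  have h1 := Finset.sum_le_sum fun i (_ : i ∈ univ) => hy_split i
  have h2 := Finset.sum_congr rfl fun i (_ : i ∈ univ) => hx_split i
  rw [sum_add_distrib, ← sum_filter] at h1 h2
  simp only [PiLp.sub_apply]
  linarith

section Constraint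

variable {m n : ℕ} {M : Matrix (Fin m) (Fin n) ℝ} {p : Fin m → ℝ}

theorem mulVec_add_vecE_transpose_mulVec (M : Matrix (Fin m) (Fin n) ℝ)
    (x : EuclideanSpace ℝ (Fin n)) (u : Fin m → ℝ) :
    M *ᵥ (x + vecE (Mᵀ *ᵥ u)).ofLp = M *ᵥ x + (M * Mᵀ) *ᵥ u := by
  simp [vecE, mulVec_add, mulVec_mulVec]

theorem projB_add_vecE_transpose_mulVec (hM : IsUnit (M * Mᵀ).det)
    {x : EuclideanSpace ℝ (Fin n)} (hx : x ∈ Bset M p) (u : Fin m → ℝ) :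
    projB M p (x + vecE (Mᵀ *ᵥ u)) = x := by
  have hx : M *ᵥ x = p := hx
  rw [projB, mulVec_add_vecE_transpose_mulVec, hx, add_sub_cancel_left, mulVec_mulVec, Mdag,
    Matrix.mul_assoc, nonsing_inv_mul _ hM, Matrix.mul_one, add_sub_cancel_right]

theorem reflB_add_vecE_transpose_mulVec (hM : IsUnit (M * Mᵀ).det)
    {x : EuclideanSpace ℝ (Fin n)} (hx : x ∈ Bset M p) (u : Fin m → ℝ) :
    reflB M p (x + vecE (Mᵀ *ᵥ u)) = x - vecE (Mᵀ *ᵥ u) := by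
  rw [reflB, projB_add_vecE_transpose_mulVec hM hx]
  module

theorem add_vecE_transpose_mulVec_notMem_Bset (hM : IsUnit (M * Mᵀ).det)
    {x : EuclideanSpace ℝ (Fin n)} (hx : x ∈ Bset M p) {u : Fin m → ℝ} (hu : u ≠ 0) :
    x + vecE (Mᵀ *ᵥ u) ∉ Bset M p := by
  intro h
  have h : M *ᵥ x + (M * Mᵀ) *ᵥ u = M *ᵥ x + 0 := by
    rw [← mulVec_add_vecE_transpose_mulVec, add_zero, h, hx]
  exact hu (mulVec_injective_iff_isUnit.2 ((isUnit_iff_isUnit_det _).2 hM)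
    ((add_left_cancel h).trans (mulVec_zero _).symm))

end Constraint

theorem exists_pos_le_abs_of_ne_zero {ι : Type*} [Finite ι] (x : ι → ℝ) :
    ∃ c > 0, ∀ i, x i ≠ 0 → c ≤ |x i| := by
  have h : ∀ᶠ c in 𝓝 (0 : ℝ), ∀ i, x i ≠ 0 → c ≤ |x i| :=
    eventually_all.2 fun i => by
      by_cases hi : x i = 0
      · simp [hi]
      · simpa [hi] using eventually_le_nhds (abs_pos.2 hi)
  obtain ⟨c, hc, hc0⟩ :=
    ((h.filter_mono nhdsWithin_le_nhds).and (self_mem_nhdsWithin (s := Set.Ioi 0))).exists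
  exact ⟨c, hc0, hc⟩

theorem stmt12 {n m s : ℕ} (M : Matrix (Fin m) (Fin n) ℝ)
    (hrank : M.rank = m) (p : Fin m → ℝ)
    (xb : EuclideanSpace ℝ (Fin n)) (hxb : xb ∈ Asp n s ∩ Bset M p)
    (hsp : sparsity xb = s) (hs : s < M.rank) :
    ∀ U ∈ nhds xb, ∃ z ∈ U,
      (∃ w ∈ projSet (Asp n s) (reflB M p z), z = (2:ℝ) • w - reflB M p z) ∧
      z ∉ Asp n s ∩ Bset M p := by
  intro U hU
  have hM : IsUnit (M * Mᵀ).det :=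
    isUnit_det_of_rank_eq_card (by rw [rank_self_mul_transpose, hrank, Fintype.card_fin])
  obtain ⟨u, hu0, hu⟩ := M.exists_ne_zero_forall_mem_transpose_mulVec_eq_zero
    (S := {i | xb i ≠ 0}) (by rw [Fintype.card_fin, ← hrank]; exact hsp.trans_lt hs)
  obtain ⟨c, hc0, hc⟩ := exists_pos_le_abs_of_ne_zero xb
  have hv : ∀ t : ℝ, vecE (Mᵀ *ᵥ (t • u)) = t • vecE (Mᵀ *ᵥ u) := fun t => by
    simp [vecE, mulVec_smul]
  have hz : Tendsto (fun t : ℝ => xb + vecE (Mᵀ *ᵥ (t • u))) (𝓝 0) (𝓝 xb) := by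
    simpa [hv] using
      (by fun_prop : Continuous fun t : ℝ => xb + t • vecE (Mᵀ *ᵥ u)).tendsto 0
  have hd : Tendsto (fun t : ℝ => ‖vecE (Mᵀ *ᵥ (t • u))‖) (𝓝 0) (𝓝 0) := by
    simpa [hv] using
      (by fun_prop : Continuous fun t : ℝ => ‖t • vecE (Mᵀ *ᵥ u)‖).tendsto 0
  have hnear : ∀ᶠ t in 𝓝[≠] (0 : ℝ),
      xb + vecE (Mᵀ *ᵥ (t • u)) ∈ U ∧ ‖vecE (Mᵀ *ᵥ (t • u))‖ < c :=
    ((hz.eventually_mem hU).and (hd.eventually (gt_mem_nhds hc0))).filter_mono nhdsWithin_le_nhds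
  obtain ⟨t, ⟨hzU, hdc⟩, ht⟩ := (hnear.and self_mem_nhdsWithin).exists
  have hR := reflB_add_vecE_transpose_mulVec hM hxb.2 (t • u)
  refine ⟨_, hzU, ⟨xb, ?_, by rw [hR]; module⟩, fun h =>
    add_vecE_transpose_mulVec_notMem_Bset hM hxb.2 (smul_ne_zero ht hu0) h.2⟩
  rw [hR, ← hsp]
  refine mem_projSet_Asp_sparsity_sub hc0.le (fun i hi => ?_) hc fun i => ?_
  · rw [mulVec_smul, Pi.smul_apply, hu i (by simpa using hi), smul_zero]
  · exact (PiLp.norm_apply_le (vecE (Mᵀ *ᵥ (t • u))) i).trans hdc.le
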